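/- Let X be a lazy simple random walk on Z_n^d started at 0 (holding probability 1/2, otherwise stepping to a uniformly random neighbor), let f : ℕ → Z_n^d be any function, and let a = (⌊n/2⌋,...,⌊n/2⌋). Then for all t ≥ 1: P(X_1 ≠ f(1), ..., X_t ≠ f(t)) ≤ P(X_1 ≠ a, ..., X_t ≠ a). That is, among all moving targets, the stationary target at the antipodal point is hardest to hit. -/

import Mathlib

open scoped ENNReal

/-- Transition kernel of the lazy simple random walk on `ℤ_n^d`: with probability `1/2`
stay put, otherwise pick a uniform direction `(i, ±)` among the `2d` unit steps and move. -/
noncomputable def lazyP (n d : ℕ) (x y : Fin d → ZMod n) : ℝ≥0∞ :=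
  (if y = x then 1 / 2 else 0) +
    (∑ i : Fin d,
        ((if y = Function.update x i (x i + 1) then (1 : ℝ≥0∞) else 0) +
          (if y = Function.update x i (x i - 1) then (1 : ℝ≥0∞) else 0))) / (4 * d)

/-- `stayProb P b D t y` is the probability that the chain with kernel `P` started at `b`
satisfies `X_s ∈ D_s` for all `1 ≤ s ≤ t` and `X_t = y`. -/
noncomputable def stayProb {V : Type*} [Fintype V] [DecidableEq V]
    (P : V → V → ℝ≥0∞) (b : V) (D : ℕ → Finset V) : ℕ → V → ℝ≥0∞
  | 0 => fun y => if y = b then 1 else 0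
  | s + 1 => fun y => if y ∈ D (s + 1) then ∑ z, stayProb P b D s z * P z y else 0

/-!
Let `P` be a stochastic kernel, `q m = Pᵐ(a, a)`, `h k` the probability that the walk from `a`
avoids `a` at times `1, …, k`, and `F_g r` the probability that the walk from `b` first meets a
target `g` at time `r + 1`. The last-exit decomposition `∑_{m + k = N} q m * h k = 1` says that the
generating functions satisfy `Q H = 1 / (1 - X)`, so the probability `∑_{r ≤ N} F_g r` of meeting
`g` by time `N + 1` is the `N`-th coefficient of `(F_g Q) H`. By the first-passage decomposition,
the `s`-th coefficient of `F_g Q` is at least `Pˢ⁺¹(b, g (s + 1))` as soon as `q` dominates every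
`Pᵗ(x, y)`, with equality for the constant target `a`. So if also `Pᵗ(b, a) ≤ Pᵗ(b, y)` for all
`y`, the constant target `a` is the hardest one to meet.

For the lazy walk on the torus, by translation invariance both conditions (with `b = 0`) say that
`Pᵗ(0, ·)` is largest at `0` and smallest at the antipode. Both follow from the stronger fact that
`Pᵗ(0, ·)` decreases with the circular distance `|yᵢ|` in each coordinate separately, a property
that one step of the walk preserves.
-/

open Finset Function
open scoped PowerSeries

lemma update_add_eq_add_single {ι G : Type*} [DecidableEq ι] [AddGroup G] (x : ι → G) (i : ι)
    (c : G) : update x i (x i + c) = x + Pi.single i c := by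
  ext j
  by_cases hj : j = i <;> simp [hj]

lemma update_add_single_self {ι G : Type*} [DecidableEq ι] [AddGroup G] (x : ι → G) (j : ι)
    (c a : G) : update x j c + Pi.single j a = update x j (c + a) := by
  ext k
  by_cases hk : k = j <;> simp [hk]

lemma update_add_single_of_ne {ι G : Type*} [DecidableEq ι] [AddGroup G] (x : ι → G) {i j : ι}
    (hij : i ≠ j) (c a : G) : update x j c + Pi.single i a = update (x + Pi.single i a) j c := by
  ext k
  by_cases hk : k = j
  · subst hk; simp [Ne.symm hij]
  · simp [hk]

lemma sum_range_succ_eq_coeff_mul_mk_one {R : Type*} [CommSemiring R] (g : ℕ → R) (N : ℕ) :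
    ∑ r ∈ range (N + 1), g r = PowerSeries.coeff N (PowerSeries.mk g * PowerSeries.mk 1) := by
  simp [PowerSeries.coeff_mul, Nat.sum_antidiagonal_eq_sum_range_succ (fun i _ => g i)]

open PowerSeries in
lemma coeff_mul_mul_le_of_coeff_mul_le {A B Q : ℝ≥0∞⟦X⟧}
    (h : ∀ s, coeff s (A * Q) ≤ coeff s (B * Q)) (H : ℝ≥0∞⟦X⟧) (N : ℕ) :
    coeff N (A * Q * H) ≤ coeff N (B * Q * H) := by
  rw [coeff_mul, coeff_mul]
  gcongr with p
  exact h p.1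

namespace MovingTarget

variable {V : Type*} [Fintype V] [DecidableEq V] (P : V → V → ℝ≥0∞)

noncomputable def transitionProb : ℕ → V → V → ℝ≥0∞
  | 0 => fun x y => if y = x then 1 else 0
  | t + 1 => fun x y => ∑ z, transitionProb t x z * P z y

/-- The probability that the walk from `b` first meets the target `f` at time `r + 1`. -/
noncomputable def firstHitProb (b : V) (f : ℕ → V) (r : ℕ) : ℝ≥0∞ :=
  ∑ z, stayProb P b (fun s => {f s}ᶜ) r z * P z (f (r + 1))

noncomputable def survivalProb (b : V) (f : ℕ → V) (t : ℕ) : ℝ≥0∞ :=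
  ∑ y, stayProb P b (fun s => {f s}ᶜ) t y

variable {P}

lemma stayProb_succ_self (b : V) (f : ℕ → V) (t : ℕ) :
    stayProb P b (fun s => {f s}ᶜ) (t + 1) (f (t + 1)) = 0 := by
  simp [stayProb]

lemma sum_stayProb_mul (b : V) (f : ℕ → V) (t : ℕ) (y : V) :
    ∑ z, stayProb P b (fun s => {f s}ᶜ) t z * P z y =
      stayProb P b (fun s => {f s}ᶜ) (t + 1) y +
        if y = f (t + 1) then firstHitProb P b f t else 0 := by
  by_cases hy : y = f (t + 1)
  · subst hy
    simp [stayProb, firstHitProb]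
  · simp [stayProb, hy]

lemma transitionProb_succ (t : ℕ) (x y : V) :
    transitionProb P (t + 1) x y = ∑ z, transitionProb P t x z * P z y := rfl

lemma transitionProb_zero (x y : V) : transitionProb P 0 x y = if y = x then 1 else 0 := rfl

/-- First-passage decomposition: condition on the first meeting time `p.1 + 1` with the target. -/
lemma transitionProb_succ_eq (b : V) (f : ℕ → V) (t : ℕ) (y : V) :
    transitionProb P (t + 1) b y = stayProb P b (fun s => {f s}ᶜ) (t + 1) y +
      ∑ p ∈ antidiagonal t, firstHitProb P b f p.1 * transitionProb P p.2 (f (p.1 + 1)) y := by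
  induction t generalizing y with
  | zero =>
    rw [transitionProb_succ, show transitionProb P 0 b = stayProb P b (fun s => {f s}ᶜ) 0 from rfl,
      sum_stayProb_mul]
    simp [transitionProb_zero]
  | succ t ih =>
    simp only [transitionProb_succ (t + 1), ih, add_mul, sum_add_distrib, sum_stayProb_mul,
      sum_mul, mul_assoc, Nat.sum_antidiagonal_succ', transitionProb_zero, mul_ite, mul_one,
      mul_zero]
    rw [sum_comm, add_assoc]
    simp only [← mul_sum, ← transitionProb_succ]

lemma transitionProb_succ_target (b : V) (f : ℕ → V) (t : ℕ) :
    transitionProb P (t + 1) b (f (t + 1)) = ∑ p ∈ antidiagonal t,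
      firstHitProb P b f p.1 * transitionProb P p.2 (f (p.1 + 1)) (f (t + 1)) := by
  rw [transitionProb_succ_eq b f, stayProb_succ_self, zero_add]

lemma transitionProb_add_right [AddGroup V] (hP : ∀ x y c, P (x + c) (y + c) = P x y) (t : ℕ)
    (x y c : V) :
    transitionProb P t (x + c) (y + c) = transitionProb P t x y := by
  induction t generalizing y with
  | zero => simp [transitionProb_zero]
  | succ t ih =>
    simp only [transitionProb_succ]
    exact (Fintype.sum_equiv (Equiv.addRight c) _ _ fun z => by simp [ih, hP]).symm

lemma transitionProb_eq_zero_sub [AddGroup V] (hP : ∀ x y c, P (x + c) (y + c) = P x y) (t : ℕ)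
    (x y : V) :
    transitionProb P t x y = transitionProb P t 0 (y - x) := by
  simpa using transitionProb_add_right hP t 0 (y - x) x

variable (hP : ∀ x, ∑ y, P x y = 1)
include hP

lemma survivalProb_eq_succ_add (b : V) (f : ℕ → V) (t : ℕ) :
    survivalProb P b f t = survivalProb P b f (t + 1) + firstHitProb P b f t := by
  calc survivalProb P b f t = ∑ y, ∑ z, stayProb P b (fun s => {f s}ᶜ) t z * P z y := by
        simp only [survivalProb, sum_comm (γ := V), ← mul_sum, hP, mul_one]
    _ = _ := by simp only [sum_stayProb_mul, sum_add_distrib, sum_ite_eq', mem_univ, if_true,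
        survivalProb]

lemma survivalProb_add_sum_firstHitProb (b : V) (f : ℕ → V) (t : ℕ) :
    survivalProb P b f t + ∑ r ∈ range t, firstHitProb P b f r = 1 := by
  induction t with
  | zero => simp [survivalProb, stayProb]
  | succ t ih => rw [sum_range_succ, ← ih, survivalProb_eq_succ_add hP b f t]; ring

/-- Last-exit decomposition: at time `k` the walk from `a` was last at `a` at some time `p.1`. -/
lemma sum_antidiagonal_transitionProb_mul_survivalProb (a : V) (k : ℕ) :
    ∑ p ∈ antidiagonal k, transitionProb P p.1 a a * survivalProb P a (fun _ => a) p.2 = 1 := by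
  induction k with
  | zero => simp [transitionProb_zero, survivalProb, stayProb]
  | succ k ih =>
    have hreturn : transitionProb P (k + 1) a a =
        ∑ p ∈ antidiagonal k, transitionProb P p.1 a a * firstHitProb P a (fun _ => a) p.2 := by
      rw [transitionProb_succ_target a (fun _ => a), ← Nat.sum_antidiagonal_swap]
      simp only [Prod.fst_swap, Prod.snd_swap, mul_comm]
    have hzero : survivalProb P a (fun _ => a) 0 = 1 := by simp [survivalProb, stayProb]
    rw [Nat.sum_antidiagonal_succ', hreturn, hzero, mul_one, add_comm, ← ih, ← sum_add_distrib]
    exact sum_congr rfl fun p _ => by rw [survivalProb_eq_succ_add hP a _ p.2, mul_add]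

theorem sum_firstHitProb_const_le {a b : V}
    (hdiag : ∀ t x y, transitionProb P t x y ≤ transitionProb P t a a)
    (hmin : ∀ t y, transitionProb P t b a ≤ transitionProb P t b y) (f : ℕ → V) (N : ℕ) :
    ∑ r ∈ range N, firstHitProb P b (fun _ => a) r ≤ ∑ r ∈ range N, firstHitProb P b f r := by
  obtain _ | N := N
  · simp
  set Q : ℝ≥0∞⟦X⟧ := PowerSeries.mk fun m => transitionProb P m a a
  set H : ℝ≥0∞⟦X⟧ := PowerSeries.mk (survivalProb P a fun _ => a)
  have hrenewal : Q * H = PowerSeries.mk 1 := by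
    ext k
    simpa [Q, H, PowerSeries.coeff_mul] using
      sum_antidiagonal_transitionProb_mul_survivalProb hP a k
  have hconv : ∀ s, PowerSeries.coeff s (PowerSeries.mk (firstHitProb P b fun _ => a) * Q) ≤
      PowerSeries.coeff s (PowerSeries.mk (firstHitProb P b f) * Q) := fun s => by
    simp only [Q, PowerSeries.coeff_mul, PowerSeries.coeff_mk]
    calc _ = transitionProb P (s + 1) b a := (transitionProb_succ_target b (fun _ => a) s).symm
      _ ≤ transitionProb P (s + 1) b (f (s + 1)) := hmin _ _
      _ = _ := transitionProb_succ_target b f s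
      _ ≤ _ := by gcongr; exact hdiag _ _ _
  rw [sum_range_succ_eq_coeff_mul_mk_one, sum_range_succ_eq_coeff_mul_mk_one, ← hrenewal,
    ← mul_assoc, ← mul_assoc]
  exact coeff_mul_mul_le_of_coeff_mul_le hconv H N

theorem survivalProb_le_survivalProb_const {a b : V}
    (hdiag : ∀ t x y, transitionProb P t x y ≤ transitionProb P t a a)
    (hmin : ∀ t y, transitionProb P t b a ≤ transitionProb P t b y) (f : ℕ → V) (t : ℕ) :
    survivalProb P b f t ≤ survivalProb P b (fun _ => a) t := by
  have hf := survivalProb_add_sum_firstHitProb hP b f t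
  have ha := survivalProb_add_sum_firstHitProb hP b (fun _ => a) t
  have hfin : ∑ r ∈ range t, firstHitProb P b f r ≠ ⊤ :=
    ne_top_of_le_ne_top ENNReal.one_ne_top (hf ▸ le_add_self)
  rw [← ENNReal.add_le_add_iff_right hfin, hf, ← ha]
  exact add_le_add_right (sum_firstHitProb_const_le hP hdiag hmin f t) _

end MovingTarget

namespace ZMod

variable {n : ℕ}

lemma natAbs_valMinAbs_add_le_add (a b : ZMod n) :
    (a + b).valMinAbs.natAbs ≤ a.valMinAbs.natAbs + b.valMinAbs.natAbs :=
  (natAbs_valMinAbs_add_le a b).trans (Int.natAbs_add_le _ _)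

lemma natAbs_valMinAbs_natCast_le [NeZero n] (c : ℕ) : (c : ZMod n).valMinAbs.natAbs ≤ c := by
  by_cases hc : c ≤ n / 2
  · simp [valMinAbs_natCast_of_le_half hc]
  · exact (natAbs_valMinAbs_le _).trans (by omega)

lemma natAbs_valMinAbs_natCast_of_le_half {c : ℕ} (hc : c ≤ n / 2) :
    (c : ZMod n).valMinAbs.natAbs = c := by
  simp [valMinAbs_natCast_of_le_half hc]

end ZMod

/-- `u` decreases with the circular distance `|z| = z.valMinAbs.natAbs` to `0`. -/
def RadiallyAntitone {n : ℕ} (u : ZMod n → ℝ≥0∞) : Prop :=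
  ∀ z z', z.valMinAbs.natAbs ≤ z'.valMinAbs.natAbs → u z' ≤ u z

namespace RadiallyAntitone

variable {n : ℕ} {u : ZMod n → ℝ≥0∞}

lemma neg (hu : RadiallyAntitone u) (z : ZMod n) : u (-z) = u z :=
  le_antisymm (hu _ _ (ZMod.natAbs_valMinAbs_neg z).ge) (hu _ _ (ZMod.natAbs_valMinAbs_neg z).le)

/-- Up to the factor `1 / 4`, this is one step of the one-dimensional lazy walk. -/
lemma smooth [NeZero n] (hu : RadiallyAntitone u) :
    RadiallyAntitone fun z => 2 * u z + u (z - 1) + u (z + 1) := by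
  set v : ZMod n → ℝ≥0∞ := fun z => 2 * u z + u (z - 1) + u (z + 1)
  have hv_neg : ∀ z, v (-z) = v z := fun z => by
    simp only [v, hu.neg, show -z - 1 = -(z + 1) by ring, show -z + 1 = -(z - 1) by ring]
    ring
  have hone : ∀ z : ZMod n, (-1 + z).valMinAbs.natAbs ≤ z.valMinAbs.natAbs + 1 := fun z => by
    have := ZMod.natAbs_valMinAbs_add_le_add (-1) z
    rw [ZMod.natAbs_valMinAbs_neg] at this
    have := ZMod.natAbs_valMinAbs_natCast_le (n := n) 1
    push_cast at this
    omega
  -- `v (k + 1) ≤ v k` reduces to `u (k + 1) + u (k + 2) ≤ u (k - 1) + u k`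
  have hsucc : ∀ k : ℕ, k + 1 ≤ n / 2 → v (k + 1 : ℕ) ≤ v k := fun k hk => by
    have hk₀ := ZMod.natAbs_valMinAbs_natCast_of_le_half (n := n) (c := k) (by omega)
    have hk₁ := ZMod.natAbs_valMinAbs_natCast_of_le_half (n := n) hk
    push_cast at hk₁ ⊢
    have h₁ : u (k + 1) ≤ u (k - 1) := hu _ _ <| by
      have := hone k; rw [neg_add_eq_sub] at this; omega
    have h₂ : u (k + 1 + 1) ≤ u k := hu _ _ <| by
      have := hone (k + 1 + 1); rw [show -1 + ((k : ZMod n) + 1 + 1) = k + 1 by ring] at this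
      omega
    simp only [v, add_sub_cancel_right, two_mul]
    calc u (k + 1) + u (k + 1) + u k + u (k + 1 + 1)
        = (u (k + 1) + u (k + 1 + 1)) + (u k + u (k + 1)) := by ring
      _ ≤ (u (k - 1) + u k) + (u k + u (k + 1)) := by gcongr
      _ = u k + u k + u (k - 1) + u (k + 1) := by ring
  have hchain : ∀ k k' : ℕ, k ≤ k' → k' ≤ n / 2 → v k' ≤ v k := fun k k' hkk' => by
    induction k', hkk' using Nat.le_induction with
    | base => exact fun _ => le_rfl
    | succ m _ ih => exact fun hm => (hsucc m hm).trans (ih (by omega))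
  have hv_natAbs : ∀ z : ZMod n, v z = v (z.valMinAbs.natAbs) := fun z => by
    rw [ZMod.natCast_natAbs_valMinAbs]
    split_ifs <;> simp [hv_neg]
  intro z z' h
  rw [hv_natAbs z, hv_natAbs z']
  exact hchain _ _ h (ZMod.natAbs_valMinAbs_le z')

end RadiallyAntitone

def CoordRadiallyAntitone {ι : Type*} [DecidableEq ι] {n : ℕ} (g : (ι → ZMod n) → ℝ≥0∞) : Prop :=
  ∀ i x, RadiallyAntitone fun c => g (update x i c)

namespace CoordRadiallyAntitone

variable {ι : Type*} [DecidableEq ι] {n : ℕ} {g : (ι → ZMod n) → ℝ≥0∞}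

lemma indicator_zero [Fintype ι] :
    CoordRadiallyAntitone fun y : ι → ZMod n => if y = 0 then 1 else 0 := by
  intro i x c c' h
  by_cases hc' : update x i c' = 0
  · obtain rfl : c' = 0 := by simpa using congrFun hc' i
    obtain rfl : c = 0 := by simpa using h
    rfl
  · simp only [hc', if_false]
    exact zero_le

lemma le_of_forall_natAbs_le [Fintype ι] (hg : CoordRadiallyAntitone g) {x y : ι → ZMod n}
    (h : ∀ i, (y i).valMinAbs.natAbs ≤ (x i).valMinAbs.natAbs) : g x ≤ g y := by
  suffices ∀ s : Finset ι, g (s.piecewise x y) ≤ g y by simpa using this univ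
  intro s
  induction s using Finset.induction with
  | empty => simp
  | insert j s hj ih =>
    rw [piecewise_insert]
    calc g (update (s.piecewise x y) j (x j))
        ≤ g (update (s.piecewise x y) j (s.piecewise x y j)) :=
          hg j _ _ _ (by rw [piecewise_eq_of_notMem _ _ _ hj]; exact h j)
      _ ≤ g y := by rwa [update_eq_self]

end CoordRadiallyAntitone

namespace LazyWalk

open MovingTarget

variable {n d : ℕ}

lemma lazyP_eq (x y : Fin d → ZMod n) : lazyP n d x y = 2⁻¹ * (if y = x then 1 else 0) +
    (4 * d : ℝ≥0∞)⁻¹ * ∑ i, ((if y = x + Pi.single i 1 then 1 else 0) +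
      (if y = x + Pi.single i (-1) then 1 else 0)) := by
  simp only [lazyP, update_add_eq_add_single, sub_eq_add_neg, mul_ite, mul_one, mul_zero,
    one_div, ENNReal.div_eq_inv_mul]

lemma lazyP_add_right (x y c : Fin d → ZMod n) : lazyP n d (x + c) (y + c) = lazyP n d x y := by
  simp only [lazyP_eq, add_right_comm x c, add_left_inj]

lemma inv_four_mul_mul_two_mul (hd : d ≠ 0) : (4 * d : ℝ≥0∞)⁻¹ * (2 * d) = 2⁻¹ := by
  rw [show (4 : ℝ≥0∞) * d = 2 * (2 * d) by ring, ENNReal.mul_inv (by simp) (by simp), mul_assoc,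
    ENNReal.inv_mul_cancel (by simp [hd]) (by simp [ENNReal.mul_eq_top]), mul_one]

variable [NeZero n]

lemma sum_lazyP (hd : d ≠ 0) (x : Fin d → ZMod n) : ∑ y, lazyP n d x y = 1 := by
  simp only [lazyP_eq]
  rw [sum_add_distrib, ← mul_sum, ← mul_sum, sum_comm]
  simp only [sum_add_distrib, sum_ite_eq', mem_univ, if_true, sum_const, card_univ,
    Fintype.card_fin, nsmul_eq_mul]
  rw [show (d : ℝ≥0∞) * 1 + d * 1 = 2 * d by ring, inv_four_mul_mul_two_mul hd, mul_one,
    ENNReal.inv_two_add_inv_two]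

lemma sum_mul_lazyP (hd : d ≠ 0) (g : (Fin d → ZMod n) → ℝ≥0∞) (y : Fin d → ZMod n) :
    ∑ z, g z * lazyP n d z y =
      (4 * d : ℝ≥0∞)⁻¹ * ∑ i, (2 * g y + g (y - Pi.single i 1) + g (y + Pi.single i 1)) := by
  have hshift (c : Fin d → Fin d → ZMod n) :
      ∑ z, g z * ∑ i, (if y = z + c i then 1 else 0) = ∑ i, g (y - c i) := by
    simp only [mul_sum]
    rw [sum_comm]
    simp [eq_comm (a := y), ← eq_sub_iff_add_eq]
  simp only [lazyP_eq, mul_add, sum_add_distrib, mul_left_comm (g _), ← mul_sum, hshift,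
    Pi.single_neg, sub_neg_eq_add, mul_ite, mul_one, mul_zero, sum_ite_eq, mem_univ, if_true]
  rw [← inv_four_mul_mul_two_mul hd]
  simp only [sum_const, card_univ, Fintype.card_fin, nsmul_eq_mul]
  ring

lemma _root_.CoordRadiallyAntitone.sum_mul_lazyP (hd : d ≠ 0) {g : (Fin d → ZMod n) → ℝ≥0∞}
    (hg : CoordRadiallyAntitone g) : CoordRadiallyAntitone fun y => ∑ z, g z * lazyP n d z y := by
  intro j x c c' h
  simp only [LazyWalk.sum_mul_lazyP hd, sub_eq_add_neg, ← Pi.single_neg]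
  refine mul_le_mul_right (sum_le_sum fun i _ => ?_) _
  by_cases hij : i = j
  · subst hij
    simp only [update_add_single_self, ← sub_eq_add_neg]
    exact (hg i x).smooth c c' h
  · simp only [update_add_single_of_ne _ hij]
    gcongr <;> exact hg j _ c c' h

lemma coordRadiallyAntitone_transitionProb (hd : d ≠ 0) (t : ℕ) :
    CoordRadiallyAntitone (transitionProb (lazyP n d) t 0) := by
  induction t with
  | zero => exact CoordRadiallyAntitone.indicator_zero
  | succ t ih => exact ih.sum_mul_lazyP hd

lemma transitionProb_le_transitionProb_self (hd : d ≠ 0) (t : ℕ) (x y a : Fin d → ZMod n) :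
    transitionProb (lazyP n d) t x y ≤ transitionProb (lazyP n d) t a a := by
  rw [transitionProb_eq_zero_sub lazyP_add_right t x,
    transitionProb_eq_zero_sub lazyP_add_right t a, sub_self]
  exact (coordRadiallyAntitone_transitionProb hd t).le_of_forall_natAbs_le fun i => by simp

lemma transitionProb_antipode_le (hd : d ≠ 0) (t : ℕ) (y : Fin d → ZMod n) :
    transitionProb (lazyP n d) t 0 (fun _ => ((n / 2 : ℕ) : ZMod n)) ≤
      transitionProb (lazyP n d) t 0 y :=
  (coordRadiallyAntitone_transitionProb hd t).le_of_forall_natAbs_le fun i => by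
    rw [ZMod.natAbs_valMinAbs_natCast_of_le_half le_rfl]
    exact ZMod.natAbs_valMinAbs_le _

end LazyWalk

theorem stmt7_general (n d : ℕ) [NeZero n] (f : ℕ → Fin d → ZMod n) (t : ℕ) :
    ∑ y, stayProb (lazyP n d) 0 (fun s => {f s}ᶜ) t y ≤
      ∑ y, stayProb (lazyP n d) 0
        (fun _ => ({fun _ => ((n / 2 : ℕ) : ZMod n)} : Finset (Fin d → ZMod n))ᶜ) t y := by
  rcases eq_or_ne d 0 with rfl | hd
  · rw [Subsingleton.elim f fun _ _ => ((n / 2 : ℕ) : ZMod n)]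
  exact MovingTarget.survivalProb_le_survivalProb_const (LazyWalk.sum_lazyP hd)
    (fun t x y => LazyWalk.transitionProb_le_transitionProb_self hd t x y _)
    (LazyWalk.transitionProb_antipode_le hd) f t

/-- For the lazy simple random walk on `ℤ_n^d` started at `0`, the stationary target at
the antipodal point `a = (⌊n/2⌋, …, ⌊n/2⌋)` is hardest to hit among all moving targets:
`P(X_1 ≠ f(1), …, X_t ≠ f(t)) ≤ P(X_1 ≠ a, …, X_t ≠ a)`. -/
theorem stmt7 (n d : ℕ) [NeZero n] (f : ℕ → Fin d → ZMod n) (t : ℕ) (ht : 1 ≤ t) :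
    ∑ y, stayProb (lazyP n d) 0 (fun s => {f s}ᶜ) t y ≤
      ∑ y, stayProb (lazyP n d) 0
        (fun _ => ({fun _ => ((n / 2 : ℕ) : ZMod n)} : Finset (Fin d → ZMod n))ᶜ) t y :=
  stmt7_general n d f t
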